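/- With S_{b,B}[P](A,N) defined as the weighted sum over partitions b + b_1 + ... + b_k = N (b ≥ 0 with the boundary term b = 0 weighted by 1/2, b_i ≥ 1, weight ∏b_i·P(A,b,B)), one has S_{b,B}[P](A,0) = 0, and S_{b,B}[P](A,N) agrees with a polynomial in a_1,...,a_n, N of degree at most 2k + deg P. -/

import Mathlib

/-!
A function `f : ℕ → ℂ` agrees with a polynomial of degree `≤ d` exactly when its iterated forward
difference `Δ^[d + 1] f` vanishes (Gregory–Newton). Since
`Δ (f ⋆ g) = f (· + 1) * g 0 + f ⋆ Δ g` for the convolution `(f ⋆ g) N = ∑_{a + b = N} f a * g b`,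
the convolution of polynomial functions of degrees `d` and `e` has degree `d + e + 1`; iterating,
`N ↦ ∑_{t_0 + ⋯ + t_k = N} ∏ t_i ^ β_i` is polynomial of degree `∑ β_i + k`, and by linearity the
sum over the simplex of any polynomial `R(A, t)` is a polynomial in `A, N` of degree `deg R + k`.

Because of the factors `b_i`, the constraints `b_i ≥ 1` are automatic, so `S_{b,B}[P](A, N)` is
the full simplex sum of `P(A, b, B) ∏ b_i` (which counts the face `b = 0` once) minus half the
sum of `P(A, 0, B) ∏ b_i` over that face; both integrands have degree `deg P + k`.
-/

open MvPolynomial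

/-- The sum `S_{b,B}[P](A,N)`: variables indexed by `Fin n ⊕ (Unit ⊕ Fin k)` as in the paper,
with the `Unit` part the variable `b`. -/
noncomputable def Ssum (n k : ℕ) (P : MvPolynomial (Fin n ⊕ (Unit ⊕ Fin k)) ℂ)
    (A : Fin n → ℂ) (N : ℕ) : ℂ :=
  (∑ t ∈ (Finset.Nat.antidiagonalTuple (k + 1) N).filter fun t => ∀ i, 1 ≤ t i,
      MvPolynomial.eval
        (Sum.elim A (Sum.elim (fun _ => ((t 0 : ℂ))) fun i => ((t i.succ : ℂ)))) P *
        ∏ i : Fin k, (t i.succ : ℂ)) +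
    (1 / 2 : ℂ) *
      ∑ t ∈ (Finset.Nat.antidiagonalTuple k N).filter fun t => ∀ i, 1 ≤ t i,
        MvPolynomial.eval (Sum.elim A (Sum.elim (fun _ => (0 : ℂ)) fun i => ((t i : ℂ)))) P *
          ∏ i : Fin k, (t i : ℂ)

open Finset Function fwdDiff

theorem Finset.Nat.sum_antidiagonalTuple_succ {M : Type*} [AddCommMonoid M] (k N : ℕ)
    (F : (Fin (k + 1) → ℕ) → M) :
    ∑ t ∈ Nat.antidiagonalTuple (k + 1) N, F t =
      ∑ p ∈ antidiagonal N, ∑ s ∈ Nat.antidiagonalTuple k p.2, F (Fin.cons p.1 s) := by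
  rw [Finset.sum_sigma']
  refine Finset.sum_nbij' (fun t ↦ ⟨(t 0, ∑ i : Fin k, t i.succ), Fin.tail t⟩)
    (fun x ↦ Fin.cons x.1.1 x.2) ?_ ?_ ?_ ?_ ?_
  all_goals simp only [mem_sigma, Nat.mem_antidiagonalTuple,
    HasAntidiagonal.mem_antidiagonal, Fin.sum_univ_succ, Fin.cons_zero, Fin.cons_succ,
    Fin.cons_self_tail, Fin.tail_cons, implies_true]
  · exact fun t ht ↦ ⟨ht, rfl⟩
  · rintro ⟨⟨a, b⟩, s⟩ ⟨rfl, hs⟩; rw [hs]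
  · rintro ⟨⟨a, b⟩, s⟩ ⟨-, hs⟩; rw [hs]

theorem Finset.Nat.sum_antidiagonalTuple_succ_filter_head_eq_zero {M : Type*} [AddCommMonoid M]
    (k N : ℕ) (F : (Fin (k + 1) → ℕ) → M) :
    ∑ t ∈ (Nat.antidiagonalTuple (k + 1) N).filter (fun t ↦ t 0 = 0), F t =
      ∑ s ∈ Nat.antidiagonalTuple k N, F (Fin.cons 0 s) := by
  refine sum_nbij' Fin.tail (fun s ↦ Fin.cons 0 s) ?_ ?_ ?_ ?_ ?_
  all_goals simp only [mem_filter, Nat.mem_antidiagonalTuple, Fin.sum_univ_succ,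
    Fin.cons_zero, Fin.cons_succ, Fin.tail_cons, zero_add, and_true, imp_self, implies_true]
  · rintro t ⟨ht, h0⟩; rwa [h0, zero_add] at ht
  · rintro t ⟨-, h0⟩; rw [← h0, Fin.cons_self_tail]
  · rintro t ⟨-, h0⟩; rw [← h0, Fin.cons_self_tail]

theorem Finset.Nat.sum_filter_one_le_antidiagonalTuple_succ {M : Type*} [AddCommGroup M]
    {k N : ℕ} {F : (Fin (k + 1) → ℕ) → M} (hF : ∀ t (i : Fin k), t i.succ = 0 → F t = 0) :
    ∑ t ∈ (Nat.antidiagonalTuple (k + 1) N).filter (fun t ↦ ∀ i, 1 ≤ t i), F t =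
      ∑ t ∈ Nat.antidiagonalTuple (k + 1) N, F t -
        ∑ s ∈ Nat.antidiagonalTuple k N, F (Fin.cons 0 s) := by
  rw [eq_sub_iff_add_eq, ← sum_antidiagonalTuple_succ_filter_head_eq_zero,
    ← sum_filter_add_sum_filter_not (Nat.antidiagonalTuple (k + 1) N) (fun t ↦ ∀ i, 1 ≤ t i)]
  congr 1
  rw [sum_filter, sum_filter]
  refine sum_congr rfl fun t _ ↦ ?_
  by_cases h0 : t 0 = 0
  · rw [if_pos h0, if_pos fun h ↦ absurd (h 0) (by omega)]
  · rw [if_neg h0, eq_comm, ite_eq_right_iff]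
    intro h
    obtain ⟨i, hi⟩ := not_forall.1 h
    obtain ⟨j, rfl⟩ := Fin.eq_succ_of_ne_zero (show i ≠ 0 by rintro rfl; omega)
    exact hF t j (by omega)

section FwdDiff

variable {M G : Type*} [AddCommMonoid M] [AddCommGroup G]

theorem fwdDiff_iter_eq_zero_of_le {h : M} {f : M → G} {m n : ℕ} (hf : Δ_[h] ^[m] f = 0)
    (hmn : m ≤ n) : Δ_[h] ^[n] f = 0 := by
  obtain ⟨j, rfl⟩ := Nat.exists_eq_add_of_le' hmn
  rw [iterate_add_apply, hf]
  exact iterate_fixed (fwdDiff_const h 0) j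

variable {R : Type*} [CommRing R]

theorem fwdDiff_iter_natCast_pow_eq_zero (j : ℕ) :
    Δ_[1] ^[j + 1] (fun N : ℕ ↦ (N : R) ^ j) = 0 := by
  have h := congrFun (fwdDiff_iter_pow_eq_zero_of_lt (R := R) (Nat.lt_succ_self j))
  ext N
  simpa [fwdDiff_iter_eq_sum_shift] using h N

theorem fwdDiff_sum_antidiagonal_mul (f g : ℕ → R) :
    Δ_[1] (fun N ↦ ∑ p ∈ antidiagonal N, f p.1 * g p.2) =
      fun N ↦ f (N + 1) * g 0 + ∑ p ∈ antidiagonal N, f p.1 * Δ_[1] g p.2 := by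
  ext N
  simp only [fwdDiff, Nat.sum_antidiagonal_succ', mul_sub, sum_sub_distrib]
  ring

theorem fwdDiff_iter_comp_add_one_mul_const (f : ℕ → R) (c : R) (n N : ℕ) :
    Δ_[1] ^[n] (fun M ↦ f (M + 1) * c) N = Δ_[1] ^[n] f (N + 1) * c := by
  simp only [fwdDiff_iter_eq_sum_shift, sum_mul, smul_mul_assoc, add_right_comm]

theorem fwdDiff_iter_sum_antidiagonal_mul_eq_zero {f g : ℕ → R} {d e : ℕ}
    (hf : Δ_[1] ^[d + 1] f = 0) (hg : Δ_[1] ^[e + 1] g = 0) :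
    Δ_[1] ^[d + e + 2] (fun N ↦ ∑ p ∈ antidiagonal N, f p.1 * g p.2) = 0 := by
  induction e generalizing g with
  | zero =>
    simp only [zero_add, iterate_one] at hg
    ext N
    rw [iterate_succ_apply, fwdDiff_sum_antidiagonal_mul]
    simp only [hg, Pi.zero_apply, mul_zero, sum_const_zero, add_zero,
      fwdDiff_iter_comp_add_one_mul_const, hf, zero_mul]
  | succ e ih =>
    rw [iterate_succ_apply, iterate_succ_apply] at hg
    ext N
    rw [iterate_succ_apply, fwdDiff_sum_antidiagonal_mul, ← Pi.add_def, fwdDiff_iter_add,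
      Pi.add_apply, fwdDiff_iter_comp_add_one_mul_const, fwdDiff_iter_eq_zero_of_le hf (by omega),
      show d + (e + 1) + 1 = d + e + 2 by omega, ih hg]
    simp

theorem fwdDiff_iter_sum_antidiagonalTuple_prod_eq_zero {k : ℕ} {f : Fin (k + 1) → ℕ → R}
    {d : Fin (k + 1) → ℕ} (hf : ∀ i, Δ_[1] ^[d i + 1] (f i) = 0) :
    Δ_[1] ^[∑ i, d i + k + 1]
      (fun N ↦ ∑ t ∈ Nat.antidiagonalTuple (k + 1) N, ∏ i, f i (t i)) = 0 := by
  induction k with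
  | zero => simpa [Nat.antidiagonalTuple_one] using hf 0
  | succ k ih =>
    have hconv := fwdDiff_iter_sum_antidiagonal_mul_eq_zero (hf 0)
      (ih (f := fun i ↦ f i.succ) (d := fun i ↦ d i.succ) fun i ↦ hf i.succ)
    rw [Fin.sum_univ_succ, show d 0 + ∑ i : Fin (k + 1), d i.succ + (k + 1) + 1 =
      d 0 + (∑ i : Fin (k + 1), d i.succ + k) + 2 by omega]
    convert hconv using 2 with N
    simp only [Finset.Nat.sum_antidiagonalTuple_succ, Fin.prod_univ_succ, Fin.cons_zero,
      Fin.cons_succ, mul_sum]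

end FwdDiff

theorem eq_sum_range_choose_smul_fwdDiff_iter {G : Type*} [AddCommGroup G] {f : ℕ → G} {d : ℕ}
    (hf : Δ_[1] ^[d + 1] f = 0) (N : ℕ) :
    f N = ∑ j ∈ range (d + 1), N.choose j • Δ_[1] ^[j] f 0 := by
  calc f N = ∑ j ∈ range (N + 1), N.choose j • Δ_[1] ^[j] f 0 := by
        simpa using shift_eq_sum_fwdDiff_iter 1 f N 0
    _ = ∑ j ∈ range (max (N + 1) (d + 1)), N.choose j • Δ_[1] ^[j] f 0 := by
        refine sum_subset (range_subset_range.2 (le_max_left _ _)) fun j _ hj ↦ ?_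
        rw [Nat.choose_eq_zero_of_lt (by simpa using hj), zero_smul]
    _ = _ := by
        refine (sum_subset (range_subset_range.2 (le_max_right _ _)) fun j _ hj ↦ ?_).symm
        rw [fwdDiff_iter_eq_zero_of_le hf (by simpa using hj), Pi.zero_apply, smul_zero]

theorem exists_polynomial_eval_eq_of_fwdDiff_iter_eq_zero {K : Type*} [Field K] [CharZero K]
    {f : ℕ → K} {d : ℕ} (hf : Δ_[1] ^[d + 1] f = 0) :
    ∃ p : Polynomial K, p.natDegree ≤ d ∧ ∀ N : ℕ, p.eval (N : K) = f N := by
  refine ⟨∑ j ∈ range (d + 1),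
    Polynomial.C (Δ_[1] ^[j] f 0 / j.factorial) * descPochhammer K j, ?_, fun N ↦ ?_⟩
  · refine Polynomial.natDegree_sum_le_of_forall_le _ _ fun j hj ↦
      (Polynomial.natDegree_C_mul_le _ _).trans ?_
    rw [descPochhammer_natDegree]
    exact Nat.lt_succ_iff.1 (mem_range.1 hj)
  · rw [eq_sum_range_choose_smul_fwdDiff_iter hf N, Polynomial.eval_finsetSum]
    refine sum_congr rfl fun j _ ↦ ?_
    have : (j.factorial : K) ≠ 0 := Nat.cast_ne_zero.2 j.factorial_ne_zero
    rw [Polynomial.eval_mul, Polynomial.eval_C, descPochhammer_eval_eq_descFactorial,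
      Nat.descFactorial_eq_factorial_mul_choose, nsmul_eq_mul]
    push_cast
    field_simp

theorem Polynomial.totalDegree_toMvPolynomial_le {R σ : Type*} [CommSemiring R] (i : σ)
    (p : Polynomial R) : (p.toMvPolynomial i).totalDegree ≤ p.natDegree := by
  conv_lhs => rw [p.as_sum_range_C_mul_X_pow]
  simp only [map_sum, map_mul, toMvPolynomial_C, map_pow, toMvPolynomial_X]
  refine MvPolynomial.totalDegree_finsetSum_le fun j hj ↦ ?_
  rw [MvPolynomial.C_mul_X_pow_eq_monomial]
  exact (MvPolynomial.totalDegree_monomial_le _ _).trans (by simpa using mem_range.1 hj)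

theorem MvPolynomial.totalDegree_bind₁_le {σ τ R : Type*} [CommSemiring R]
    {f : σ → MvPolynomial τ R} (hf : ∀ i, (f i).totalDegree ≤ 1) (p : MvPolynomial σ R) :
    (bind₁ f p).totalDegree ≤ p.totalDegree := by
  conv_lhs => rw [p.as_sum]
  rw [map_sum]
  refine totalDegree_finsetSum_le fun m hm ↦ ?_
  rw [bind₁_monomial]
  refine (totalDegree_mul _ _).trans ?_
  rw [totalDegree_C, zero_add]
  refine (totalDegree_finsetProd _ _).trans ((sum_le_sum fun i _ ↦ ?_).trans (le_totalDegree hm))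
  calc (f i ^ m i).totalDegree ≤ m i * (f i).totalDegree := totalDegree_pow _ _
    _ ≤ m i := by simpa using Nat.mul_le_mul_left (m i) (hf i)

theorem exists_mvPolynomial_eval_eq_sum_antidiagonalTuple_monomial {σ K : Type*} [Fintype σ]
    [Field K] [CharZero K] {k : ℕ} (m : σ ⊕ Fin (k + 1) →₀ ℕ) :
    ∃ Q : MvPolynomial (σ ⊕ Unit) K, Q.totalDegree ≤ m.degree + k ∧
      ∀ (A : σ → K) (N : ℕ), eval (Sum.elim A fun _ ↦ (N : K)) Q =
        ∑ t ∈ Nat.antidiagonalTuple (k + 1) N,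
          eval (Sum.elim A fun i ↦ (t i : K)) (monomial m 1) := by
  obtain ⟨φ, hφdeg, hφ⟩ := exists_polynomial_eval_eq_of_fwdDiff_iter_eq_zero
    (fwdDiff_iter_sum_antidiagonalTuple_prod_eq_zero (f := fun i N ↦ (N : K) ^ m (.inr i))
      fun i ↦ fwdDiff_iter_natCast_pow_eq_zero _)
  refine ⟨(∏ v, X (.inl v) ^ m (.inl v)) * φ.toMvPolynomial (.inr ()), ?_, fun A N ↦ ?_⟩
  · calc _ ≤ (∏ v, X (.inl v) ^ m (.inl v) : MvPolynomial (σ ⊕ Unit) K).totalDegree +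
            (φ.toMvPolynomial (.inr ())).totalDegree := totalDegree_mul _ _
      _ ≤ ∑ v, m (.inl v) + (∑ i, m (.inr i) + k) :=
          add_le_add ((totalDegree_finsetProd _ _).trans (by simp [totalDegree_X_pow]))
            ((Polynomial.totalDegree_toMvPolynomial_le _ _).trans hφdeg)
      _ = m.degree + k := by rw [Finsupp.degree_eq_sum, Fintype.sum_sum_type]; ring
  · simp [MvPolynomial.eval_monomial, Finsupp.prod_fintype _ _ fun _ ↦ pow_zero _,
      Fintype.prod_sum_type, hφ, mul_sum]

theorem exists_mvPolynomial_eval_eq_sum_antidiagonalTuple {σ K : Type*} [Fintype σ]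
    [Field K] [CharZero K] {k : ℕ} (p : MvPolynomial (σ ⊕ Fin (k + 1)) K) :
    ∃ Q : MvPolynomial (σ ⊕ Unit) K, Q.totalDegree ≤ p.totalDegree + k ∧
      ∀ (A : σ → K) (N : ℕ), eval (Sum.elim A fun _ ↦ (N : K)) Q =
        ∑ t ∈ Nat.antidiagonalTuple (k + 1) N, eval (Sum.elim A fun i ↦ (t i : K)) p := by
  choose Q hQdeg hQ using exists_mvPolynomial_eval_eq_sum_antidiagonalTuple_monomial (K := K)
    (σ := σ) (k := k)
  refine ⟨∑ m ∈ p.support, C (p.coeff m) * Q m, ?_, fun A N ↦ ?_⟩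
  · refine totalDegree_finsetSum_le fun m hm ↦ (totalDegree_mul _ _).trans ?_
    rw [totalDegree_C, zero_add]
    exact (hQdeg m).trans (Nat.add_le_add_right (le_totalDegree hm) k)
  · conv_rhs => rw [p.as_sum]
    simp only [map_sum, map_mul, eval_C, hQ, mul_sum]
    rw [sum_comm]
    refine sum_congr rfl fun t _ ↦ sum_congr rfl fun m _ ↦ ?_
    rw [← mul_one (p.coeff m), ← C_mul_monomial, map_mul, eval_C, mul_one]

section Integrands

variable {σ R : Type*} [CommSemiring R] {k : ℕ}

/- In `simplexIntegrand P` coordinate `0` of `Fin (k + 1)` is the variable `b` and coordinate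
`i.succ` is `b_i`; `faceIntegrand P` is `P` restricted to the face `b = 0`. -/
noncomputable def simplexIntegrand (P : MvPolynomial (σ ⊕ (Unit ⊕ Fin k)) R) :
    MvPolynomial (σ ⊕ Fin (k + 1)) R :=
  rename (Sum.map id (Sum.elim (fun _ ↦ 0) Fin.succ)) P * ∏ i : Fin k, X (.inr i.succ)

noncomputable def faceIntegrand (P : MvPolynomial (σ ⊕ (Unit ⊕ Fin k)) R) :
    MvPolynomial (σ ⊕ Fin k) R :=
  bind₁ (Sum.elim (fun a ↦ X (.inl a)) (Sum.elim 0 fun i ↦ X (.inr i))) P * ∏ i, X (.inr i)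

theorem eval_simplexIntegrand (P : MvPolynomial (σ ⊕ (Unit ⊕ Fin k)) R) (A : σ → R)
    (x : Fin (k + 1) → R) :
    eval (Sum.elim A x) (simplexIntegrand P) =
      eval (Sum.elim A (Sum.elim (fun _ ↦ x 0) fun i ↦ x i.succ)) P * ∏ i : Fin k, x i.succ := by
  have hval : Sum.elim A x ∘ Sum.map id (Sum.elim (fun _ : Unit ↦ 0) Fin.succ) =
      Sum.elim A (Sum.elim (fun _ ↦ x 0) fun i ↦ x i.succ) := by
    ext (a | _ | i) <;> rfl
  simp [simplexIntegrand, eval_rename, hval]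

theorem eval_faceIntegrand (P : MvPolynomial (σ ⊕ (Unit ⊕ Fin k)) R) (A : σ → R)
    (x : Fin k → R) :
    eval (Sum.elim A x) (faceIntegrand P) =
      eval (Sum.elim A (Sum.elim (fun _ ↦ 0) x)) P * ∏ i, x i := by
  have hval : (fun v ↦ aeval (R := R) (Sum.elim A x)
      (Sum.elim (fun a ↦ X (.inl a)) (Sum.elim (0 : Unit → _) fun i ↦ X (.inr i)) v)) =
      Sum.elim A (Sum.elim (fun _ ↦ 0) x) := by
    ext (a | _ | i) <;> simp
  simp [faceIntegrand, ← aeval_eq_eval, aeval_bind₁, hval]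

theorem totalDegree_simplexIntegrand_le [Nontrivial R]
    (P : MvPolynomial (σ ⊕ (Unit ⊕ Fin k)) R) :
    (simplexIntegrand P).totalDegree ≤ P.totalDegree + k := by
  refine (totalDegree_mul _ _).trans (add_le_add (totalDegree_rename_le _ _) ?_)
  refine (totalDegree_finsetProd _ _).trans ?_
  simp [totalDegree_X]

theorem totalDegree_faceIntegrand_le [Nontrivial R]
    (P : MvPolynomial (σ ⊕ (Unit ⊕ Fin k)) R) :
    (faceIntegrand P).totalDegree ≤ P.totalDegree + k := by
  refine (totalDegree_mul _ _).trans (add_le_add (totalDegree_bind₁_le ?_ _) ?_)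
  · rintro (a | _ | i) <;> simp [totalDegree_X]
  · refine (totalDegree_finsetProd _ _).trans ?_
    simp [totalDegree_X]

end Integrands

theorem Ssum_eq_sub (n k : ℕ) (P : MvPolynomial (Fin n ⊕ (Unit ⊕ Fin k)) ℂ) (A : Fin n → ℂ)
    (N : ℕ) :
    Ssum n k P A N =
      ∑ t ∈ Nat.antidiagonalTuple (k + 1) N,
          eval (Sum.elim A fun i ↦ (t i : ℂ)) (simplexIntegrand P) -
        1 / 2 * ∑ s ∈ Nat.antidiagonalTuple k N,
          eval (Sum.elim A fun i ↦ (s i : ℂ)) (faceIntegrand P) := by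
  simp only [eval_simplexIntegrand, eval_faceIntegrand]
  rw [Ssum, Nat.sum_filter_one_le_antidiagonalTuple_succ, sum_filter_of_ne]
  · simp only [Fin.cons_zero, Fin.cons_succ, Nat.cast_zero]
    ring
  · intro s _ hs i
    by_contra h
    exact hs (mul_eq_zero_of_right _ (prod_eq_zero (mem_univ i) (by rw [Nat.cast_eq_zero]; omega)))
  · intro t i hi
    exact mul_eq_zero_of_right _ (prod_eq_zero (mem_univ i) (by simp [hi]))

theorem Ssum_zero {n k : ℕ} (hk : k ≠ 0) (P : MvPolynomial (Fin n ⊕ (Unit ⊕ Fin k)) ℂ)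
    (A : Fin n → ℂ) : Ssum n k P A 0 = 0 := by
  simp [Ssum_eq_sub, Nat.antidiagonalTuple_zero_right, eval_simplexIntegrand,
    eval_faceIntegrand, hk]

/-- `S_{b,B}[P](A,0) = 0`, and `S_{b,B}[P](A,N)` agrees with a polynomial in
`a₁,...,aₙ,N` of (total) degree at most `2k + deg P`. -/
theorem Ssum_vanishes_and_polynomial (n k : ℕ) (hk : 1 ≤ k)
    (P : MvPolynomial (Fin n ⊕ (Unit ⊕ Fin k)) ℂ) :
    (∀ A : Fin n → ℂ, Ssum n k P A 0 = 0) ∧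
    ∃ Q : MvPolynomial (Fin n ⊕ Unit) ℂ,
      Q.totalDegree ≤ 2 * k + P.totalDegree ∧
      ∀ (A : Fin n → ℂ) (N : ℕ),
        MvPolynomial.eval (Sum.elim A fun _ => (N : ℂ)) Q = Ssum n k P A N := by
  refine ⟨Ssum_zero (by omega) P, ?_⟩
  obtain ⟨k, rfl⟩ : ∃ k', k = k' + 1 := ⟨k - 1, by omega⟩
  obtain ⟨Q₁, hQ₁deg, hQ₁⟩ :=
    exists_mvPolynomial_eval_eq_sum_antidiagonalTuple (simplexIntegrand P)
  obtain ⟨Q₂, hQ₂deg, hQ₂⟩ :=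
    exists_mvPolynomial_eval_eq_sum_antidiagonalTuple (faceIntegrand P)
  refine ⟨Q₁ - C (1 / 2) * Q₂, ?_, fun A N ↦ by simp [Ssum_eq_sub, hQ₁, hQ₂]⟩
  have h₁ := totalDegree_simplexIntegrand_le P
  have h₂ := totalDegree_faceIntegrand_le P
  refine (totalDegree_sub _ _).trans (max_le (by omega) ((totalDegree_mul _ _).trans ?_))
  rw [totalDegree_C]
  omega
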